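/- The set Y = {y ∈ ℝ : there exist c ∈ C#, k ∈ ℤ and ε ∈ {1,−1} with y − ε·φ^{3k}·c ∈ 2ℤ[φ]} is dense in ℝ and has Hausdorff dimension log 3 / log(φ³). -/

import Mathlib

/-!
Every point of `C` is a digit series `∑ d (w k) ρ^k` with `ρ = φ⁻³` and three digits `d`. Two
codes that first differ at index `n` give points at distance between `κ ρⁿ` and `φ ρⁿ` for some
`κ > 0`. The upper bound covers `C` by `3ⁿ` cylinders of diameter `≤ φ ρⁿ`, and since
`3 ρ^s = 1` for `s = log 3 / log φ³` this gives `dim C ≤ s`. The lower bound makes the map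
that reads the same digits in base 3 `s`-Hölder from `C` onto `[0, 1]`. Removing the countably
many gap endpoints leaves an image of dimension `1`, so `dim C♯ ≥ s`. The equivalent heights are
a countable union of affine copies of `C♯` and contain `C♯` together with a translate of the dense
group `2ℤ[φ]`, which is dense because `φ` is irrational.
-/

open Set

noncomputable section

/-- The golden ratio `(1+√5)/2`. -/
def gold : ℝ := (1 + Real.sqrt 5) / 2

/-- The ring `ℤ[φ]`. -/
def Zgold : Set ℝ := {x | ∃ m n : ℤ, x = m + n * gold}

/-- The set `2ℤ[φ]`. -/
def twoZgold : Set ℝ := {x | ∃ m n : ℤ, x = 2 * m + 2 * n * gold}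

/-- The Cantor set `C`: sums `Σ a_k φ^(-3k)` with digits `a_k ∈ {0, 4-2φ, 2φ-2}`. -/
def cantorC : Set ℝ :=
  {x | ∃ a : ℕ → ℝ, (∀ k, a k = 0 ∨ a k = 4 - 2 * gold ∨ a k = 2 * gold - 2) ∧
    x = ∑' k : ℕ, a k * (gold ^ (3 * k))⁻¹}

/-- The endpoints of the connected components of `ℝ ∖ C`. -/
def cantorEndpoints : Set ℝ :=
  {x | ∃ y : ℝ, y ∉ cantorC ∧ x ∈ closure (connectedComponentIn cantorCᶜ y)}

/-- `C♯`: the Cantor set minus the endpoints of complementary components. -/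
def cantorCsharp : Set ℝ := cantorC \ cantorEndpoints

open MeasureTheory
open scoped NNReal ENNReal

theorem abs_tsum_le_of_eq_zero_of_lt {f : ℕ → ℝ} {r M : ℝ} {n : ℕ} (hr0 : 0 ≤ r) (hr1 : r < 1)
    (hf0 : ∀ k < n, f k = 0) (hf : ∀ k, |f k| ≤ M * r ^ k) :
    |∑' k, f k| ≤ M / (1 - r) * r ^ n := by
  have hgeom := hasSum_geometric_of_lt_one hr0 hr1
  have hsum : Summable f := Summable.of_norm_bounded (E := ℝ) (hgeom.summable.mul_left M) hf
  rw [← Real.norm_eq_abs, ← hsum.sum_add_tsum_nat_add n,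
    Finset.sum_eq_zero fun k hk => hf0 k (Finset.mem_range.1 hk), zero_add, div_mul_eq_mul_div,
    div_eq_mul_inv]
  refine tsum_of_norm_bounded (g := fun k => M * r ^ n * r ^ k) (hgeom.mul_left _) fun k => ?_
  calc ‖f (k + n)‖ ≤ M * r ^ (k + n) := hf _
    _ = M * r ^ n * r ^ k := by ring

theorem holderOnWith_of_dist_le {X Y : Type*} [PseudoMetricSpace X] [PseudoMetricSpace Y]
    {C r : ℝ≥0} {f : X → Y} {s : Set X}
    (h : ∀ x ∈ s, ∀ y ∈ s, dist (f x) (f y) ≤ C * dist x y ^ (r : ℝ)) :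
    HolderOnWith C r f s := by
  intro x hx y hy
  rw [edist_nndist, edist_nndist, ← ENNReal.coe_rpow_of_nonneg _ r.coe_nonneg,
    ← ENNReal.coe_mul, ENNReal.coe_le_coe, ← NNReal.coe_le_coe]
  exact h x hx y hy

section ComplementaryComponents

variable {α : Type*} [LinearOrder α] [TopologicalSpace α] [OrderTopology α] {s : Set α} {x y c : α}

theorem le_of_mem_closure_connectedComponentIn_compl (hy : y ∉ s)
    (hx : x ∈ closure (connectedComponentIn sᶜ y)) (hc : c ∈ s) (hxc : x < c) : y ≤ c := by
  by_contra! hcy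
  obtain ⟨u, huc, hu⟩ := mem_closure_iff.1 hx (Iio c) isOpen_Iio hxc
  exact connectedComponentIn_subset _ _ (isPreconnected_connectedComponentIn.ordConnected.out hu
    (mem_connectedComponentIn hy) ⟨le_of_lt huc, hcy.le⟩) hc

theorem ge_of_mem_closure_connectedComponentIn_compl (hy : y ∉ s)
    (hx : x ∈ closure (connectedComponentIn sᶜ y)) (hc : c ∈ s) (hcx : c < x) : c ≤ y := by
  by_contra! hyc
  obtain ⟨u, huc, hu⟩ := mem_closure_iff.1 hx (Ioi c) isOpen_Ioi hcx
  exact connectedComponentIn_subset _ _ (isPreconnected_connectedComponentIn.ordConnected.out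
    (mem_connectedComponentIn hy) hu ⟨hyc.le, le_of_lt huc⟩) hc

theorem countable_inter_setOf_mem_closure_connectedComponentIn_compl [SecondCountableTopology α]
    (s : Set α) : (s ∩ {x | ∃ y, y ∉ s ∧ x ∈ closure (connectedComponentIn sᶜ y)}).Countable := by
  refine ((countable_image_lt_image_Ioi_within s id).union
    (countable_image_lt_image_Iio_within s id)).mono ?_
  rintro x ⟨hx, y, hy, hxy⟩
  rcases lt_or_gt_of_ne (ne_of_mem_of_not_mem hx hy) with h | h
  · exact .inl ⟨hx, y, h, fun _ => le_of_mem_closure_connectedComponentIn_compl hy hxy⟩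
  · exact .inr ⟨hx, y, h, fun _ => ge_of_mem_closure_connectedComponentIn_compl hy hxy⟩

end ComplementaryComponents

section DigitSeries

variable {b : ℕ} (d : Fin b → ℝ) (r : ℝ)

def digitSeries (w : ℕ → Fin b) : ℝ := ∑' k, d (w k) * r ^ k

variable {d r} {M : ℝ}

section Bounds

variable (hr0 : 0 ≤ r) (hr1 : r < 1) (hM : ∀ i j, |d i - d j| ≤ M)
include hr0 hr1

theorem summable_digitSeries (w : ℕ → Fin b) : Summable fun k => d (w k) * r ^ k := by
  obtain ⟨B, hB⟩ := (finite_range fun i => |d i|).bddAbove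
  refine .of_norm_bounded (E := ℝ) ((summable_geometric_of_lt_one hr0 hr1).mul_left B) fun k => ?_
  rw [norm_mul, norm_pow, Real.norm_of_nonneg hr0, Real.norm_eq_abs]
  gcongr
  exact hB (mem_range_self _)

theorem digitSeries_sub (w v : ℕ → Fin b) :
    digitSeries d r w - digitSeries d r v = ∑' k, (d (w k) - d (v k)) * r ^ k := by
  simp only [digitSeries, sub_mul]
  exact ((summable_digitSeries hr0 hr1 w).tsum_sub (summable_digitSeries hr0 hr1 v)).symm

include hM

theorem abs_digitSeries_sub_le {w v : ℕ → Fin b} {n : ℕ} (hwv : ∀ k < n, w k = v k) :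
    |digitSeries d r w - digitSeries d r v| ≤ M / (1 - r) * r ^ n := by
  rw [digitSeries_sub hr0 hr1]
  refine abs_tsum_le_of_eq_zero_of_lt hr0 hr1 (fun k hk => by rw [hwv k hk, sub_self, zero_mul])
    fun k => ?_
  rw [abs_mul, abs_pow, abs_of_nonneg hr0]
  exact mul_le_mul_of_nonneg_right (hM _ _) (pow_nonneg hr0 k)

theorem le_abs_digitSeries_sub {g : ℝ} (hg : ∀ i j, i ≠ j → g ≤ |d i - d j|)
    {w v : ℕ → Fin b} {n : ℕ} (hwv : ∀ k < n, w k = v k) (hn : w n ≠ v n) :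
    (g - M * r / (1 - r)) * r ^ n ≤ |digitSeries d r w - digitSeries d r v| := by
  classical
  set e : ℕ → ℝ := fun k => (d (w k) - d (v k)) * r ^ k
  set tail := ∑' k, if k = n then 0 else e k
  have he (k : ℕ) : |e k| ≤ M * r ^ k := by
    rw [abs_mul, abs_pow, abs_of_nonneg hr0]
    exact mul_le_mul_of_nonneg_right (hM _ _) (pow_nonneg hr0 k)
  have hsplit : ∑' k, e k = e n + tail :=
    Summable.tsum_eq_add_tsum_ite' n <| Summable.update (.of_norm_bounded (E := ℝ)
      ((summable_geometric_of_lt_one hr0 hr1).mul_left M) he) n 0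
  have htail : |tail| ≤ M / (1 - r) * r ^ (n + 1) := by
    refine abs_tsum_le_of_eq_zero_of_lt hr0 hr1 (fun k hk => ?_) fun k => ?_
    · rcases (Nat.lt_succ_iff.1 hk).lt_or_eq with hk | rfl
      · simp [e, hk.ne, hwv k hk]
      · simp
    · split_ifs
      · simpa using (abs_nonneg _).trans (he k)
      · exact he k
  have hlead : g * r ^ n ≤ |e n| := by
    rw [abs_mul, abs_pow, abs_of_nonneg hr0]
    exact mul_le_mul_of_nonneg_right (hg _ _ hn) (pow_nonneg hr0 n)
  rw [digitSeries_sub hr0 hr1, hsplit]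
  calc (g - M * r / (1 - r)) * r ^ n = g * r ^ n - M / (1 - r) * r ^ (n + 1) := by ring
    _ ≤ |e n| - |tail| := by gcongr
    _ ≤ |e n + tail| := abs_sub_abs_le_abs_add _ _

theorem hausdorffMeasure_range_digitSeries_le {s : ℝ≥0} (hs : (b : ℝ) * r ^ (s : ℝ) = 1) :
    μH[s] (range (digitSeries d r)) ≤ ENNReal.ofReal ((M / (1 - r)) ^ (s : ℝ)) := by
  have hb : 0 < b := Nat.pos_of_ne_zero fun hb => by simp [hb] at hs
  have hK : 0 ≤ M / (1 - r) :=
    div_nonneg ((abs_nonneg _).trans (hM ⟨0, hb⟩ ⟨0, hb⟩)) (sub_nonneg.2 hr1.le)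
  let cylinder (n : ℕ) (u : Fin n → Fin b) : Set ℝ :=
    digitSeries d r '' {w | ∀ k : Fin n, w k = u k}
  have hlim : Filter.Tendsto (fun n => ENNReal.ofReal (M / (1 - r) * r ^ n)) Filter.atTop
      (nhds 0) := by
    simpa using ENNReal.tendsto_ofReal
      ((tendsto_pow_atTop_nhds_zero_of_lt_one hr0 hr1).const_mul (M / (1 - r)))
  have hdiam (n : ℕ) (u : Fin n → Fin b) :
      Metric.ediam (cylinder n u) ≤ ENNReal.ofReal (M / (1 - r) * r ^ n) := by
    refine Metric.ediam_le ?_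
    rintro _ ⟨w, hw, rfl⟩ _ ⟨v, hv, rfl⟩
    rw [edist_dist, Real.dist_eq]
    exact ENNReal.ofReal_le_ofReal <| abs_digitSeries_sub_le hr0 hr1 hM fun k hk =>
      (hw ⟨k, hk⟩).trans (hv ⟨k, hk⟩).symm
  have hcover (n : ℕ) : range (digitSeries d r) ⊆ ⋃ u, cylinder n u := by
    rintro _ ⟨w, rfl⟩
    exact mem_iUnion.2 ⟨fun k => w k, w, fun _ => rfl, rfl⟩
  have hsum (n : ℕ) : ∑ u, Metric.ediam (cylinder n u) ^ (s : ℝ) ≤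
      ENNReal.ofReal ((M / (1 - r)) ^ (s : ℝ)) :=
    calc ∑ u, Metric.ediam (cylinder n u) ^ (s : ℝ)
        ≤ ∑ _u : Fin n → Fin b, ENNReal.ofReal ((M / (1 - r) * r ^ n) ^ (s : ℝ)) := by
          gcongr with u
          rw [← ENNReal.ofReal_rpow_of_nonneg (by positivity) s.coe_nonneg]
          exact ENNReal.rpow_le_rpow (hdiam n u) s.coe_nonneg
      _ = ENNReal.ofReal ((b : ℝ) ^ n * (M / (1 - r) * r ^ n) ^ (s : ℝ)) := by
          rw [Finset.sum_const, Finset.card_univ, Fintype.card_fun, Fintype.card_fin,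
            Fintype.card_fin, ← ENNReal.ofReal_nsmul, nsmul_eq_mul, Nat.cast_pow]
      _ = ENNReal.ofReal ((M / (1 - r)) ^ (s : ℝ)) := by
          rw [Real.mul_rpow hK (by positivity), ← Real.rpow_pow_comm hr0, mul_left_comm,
            ← mul_pow, hs, one_pow, mul_one]
  calc μH[s] (range (digitSeries d r))
      ≤ Filter.liminf (fun n => ∑ u, Metric.ediam (cylinder n u) ^ (s : ℝ)) Filter.atTop :=
        Measure.hausdorffMeasure_le_liminf_sum _ _ _ hlim cylinder
          (.of_forall hdiam) (.of_forall hcover)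
    _ ≤ ENNReal.ofReal ((M / (1 - r)) ^ (s : ℝ)) :=
        (Filter.liminf_le_liminf (.of_forall hsum)).trans (Filter.liminf_const _).le

end Bounds

section Separated

variable {g : ℝ} (hr : 0 < r) (hr1 : r < 1) (hM : ∀ i j, |d i - d j| ≤ M)
  (hg : ∀ i j, i ≠ j → g ≤ |d i - d j|) (hκ : 0 < g - M * r / (1 - r))
include hr hr1 hM hg hκ

theorem digitSeries_injective : Function.Injective (digitSeries d r) := by
  intro w v hwv
  by_contra hne
  have := le_abs_digitSeries_sub hr.le hr1 hM hg (w := w) (v := v)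
    (fun k hk => PiNat.apply_eq_of_lt_firstDiff hk) (PiNat.apply_firstDiff_ne hne)
  rw [hwv, sub_self, abs_zero] at this
  exact this.not_gt (mul_pos hκ (pow_pos hr _))

theorem abs_ofDigits_sub_le_rpow {s : ℝ≥0} (hs : (b : ℝ) * r ^ (s : ℝ) = 1) (w v : ℕ → Fin b) :
    |Real.ofDigits w - Real.ofDigits v| ≤
      (g - M * r / (1 - r))⁻¹ ^ (s : ℝ) * |digitSeries d r w - digitSeries d r v| ^ (s : ℝ) := by
  rcases eq_or_ne w v with rfl | hne
  · simp only [sub_self, abs_zero]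
    positivity
  set κ := g - M * r / (1 - r)
  set n := PiNat.firstDiff w v
  have hwv : ∀ k < n, w k = v k := fun k hk => PiNat.apply_eq_of_lt_firstDiff hk
  calc |Real.ofDigits w - Real.ofDigits v| ≤ ((b : ℝ) ^ n)⁻¹ :=
        Real.abs_ofDigits_sub_ofDigits_le hwv
    _ = (κ⁻¹ * (κ * r ^ n)) ^ (s : ℝ) := by
        rw [inv_mul_cancel_left₀ hκ.ne', ← Real.rpow_pow_comm hr.le, ← inv_pow,
          eq_inv_of_mul_eq_one_right hs]
    _ ≤ (κ⁻¹ * |digitSeries d r w - digitSeries d r v|) ^ (s : ℝ) := by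
        gcongr
        exact le_abs_digitSeries_sub hr.le hr1 hM hg hwv (PiNat.apply_firstDiff_ne hne)
    _ = κ⁻¹ ^ (s : ℝ) * |digitSeries d r w - digitSeries d r v| ^ (s : ℝ) :=
        Real.mul_rpow (inv_nonneg.2 hκ.le) (abs_nonneg _)

theorem le_dimH_range_digitSeries_sdiff (hb : 1 < b) {s : ℝ≥0} (hs : (b : ℝ) * r ^ (s : ℝ) = 1)
    {t : Set ℝ} (ht : t.Countable) : (s : ℝ≥0∞) ≤ dimH (range (digitSeries d r) \ t) := by
  have : NeZero b := ⟨by omega⟩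
  have hs0 : s ≠ 0 := by
    rintro rfl
    rw [NNReal.coe_zero, Real.rpow_zero, mul_one, Nat.cast_eq_one] at hs
    omega
  set G := Real.ofDigits ∘ Function.invFun (digitSeries d r)
  have hGS (w : ℕ → Fin b) : G (digitSeries d r w) = Real.ofDigits w :=
    congrArg Real.ofDigits (Function.leftInverse_invFun (digitSeries_injective hr hr1 hM hg hκ) w)
  have hG : HolderOnWith ((g - M * r / (1 - r))⁻¹ ^ (s : ℝ)).toNNReal s G
      (range (digitSeries d r)) := by
    refine holderOnWith_of_dist_le ?_
    rintro _ ⟨w, rfl⟩ _ ⟨v, rfl⟩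
    rw [Real.coe_toNNReal _ (by positivity), Real.dist_eq, Real.dist_eq, hGS, hGS]
    exact abs_ofDigits_sub_le_rpow hr hr1 hM hg hκ hs w v
  have hIcc : Icc 0 1 ⊆ G '' (range (digitSeries d r) \ t) ∪ G '' t := by
    intro x hx
    obtain ⟨w, -, rfl⟩ := Real.ofDigits_SurjOn hb hx
    rw [← image_union, sdiff_union_self]
    exact ⟨_, subset_union_left (mem_range_self w), hGS w⟩
  have hdim : 1 ≤ dimH (G '' (range (digitSeries d r) \ t)) :=
    calc (1 : ℝ≥0∞) = dimH (Icc (0 : ℝ) 1) := by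
          rw [Real.dimH_of_nonempty_interior (by simp), Module.finrank_self, Nat.cast_one]
      _ ≤ dimH (G '' (range (digitSeries d r) \ t)) := by
          simpa [dimH_union, dimH_countable (ht.image G)] using dimH_mono hIcc
  have := hdim.trans ((hG.mono sdiff_subset).dimH_image_le (pos_iff_ne_zero.2 hs0))
  rwa [ENNReal.le_div_iff_mul_le (.inl (ENNReal.coe_ne_zero.2 hs0)) (.inl ENNReal.coe_ne_top),
    one_mul] at this

theorem dimH_range_digitSeries_sdiff (hb : 1 < b) {s : ℝ≥0} (hs : (b : ℝ) * r ^ (s : ℝ) = 1)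
    {t : Set ℝ} (ht : t.Countable) : dimH (range (digitSeries d r) \ t) = s :=
  le_antisymm ((dimH_mono sdiff_subset).trans <| dimH_le_of_hausdorffMeasure_ne_top <|
      ne_top_of_le_ne_top ENNReal.ofReal_ne_top <|
        hausdorffMeasure_range_digitSeries_le hr.le hr1 hM hs)
    (le_dimH_range_digitSeries_sdiff hr hr1 hM hg hκ hb hs ht)

end Separated

end DigitSeries

theorem gold_sq : gold ^ 2 = gold + 1 := Real.goldenRatio_sq

theorem three_halves_lt_gold : 3 / 2 < gold := by
  have : 2 < √5 := by rw [Real.lt_sqrt] <;> norm_num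
  rw [gold]; linarith

theorem gold_lt_five_thirds : gold < 5 / 3 := by
  have : √5 < 7 / 3 := by rw [Real.sqrt_lt'] <;> norm_num
  rw [gold]; linarith

def cantorDigit : Fin 3 → ℝ := ![0, 4 - 2 * gold, 2 * gold - 2]

theorem cantorC_eq_range : cantorC = range (digitSeries cantorDigit (gold ^ 3)⁻¹) := by
  have hdigit (a : ℝ) :
      (a = 0 ∨ a = 4 - 2 * gold ∨ a = 2 * gold - 2) ↔ ∃ i, cantorDigit i = a := by
    simp [cantorDigit, Fin.exists_fin_succ, eq_comm]
  ext x
  simp only [cantorC, digitSeries, mem_range, hdigit, ← inv_pow, ← pow_mul]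
  constructor
  · rintro ⟨a, ha, rfl⟩
    choose w hw using ha
    exact ⟨w, by simp [hw]⟩
  · rintro ⟨w, rfl⟩
    exact ⟨_, fun k => ⟨w k, rfl⟩, rfl⟩

theorem abs_cantorDigit_sub_le (i j : Fin 3) : |cantorDigit i - cantorDigit j| ≤ 2 * gold - 2 := by
  have := three_halves_lt_gold
  have := gold_lt_five_thirds
  rw [abs_le]
  fin_cases i <;> fin_cases j <;> simp [cantorDigit] <;> (try constructor) <;> linarith

theorem le_abs_cantorDigit_sub {i j : Fin 3} (hij : i ≠ j) :
    4 * gold - 6 ≤ |cantorDigit i - cantorDigit j| := by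
  have := three_halves_lt_gold
  have := gold_lt_five_thirds
  fin_cases i <;> fin_cases j <;> simp [cantorDigit] at hij ⊢ <;>
    first | (rw [abs_of_nonneg] <;> linarith) | (rw [abs_of_nonpos] <;> linarith)

-- The left-hand side equals `5φ - 8 ≈ 0.09`.
theorem cantor_separation_pos :
    0 < 4 * gold - 6 - (2 * gold - 2) * (gold ^ 3)⁻¹ / (1 - (gold ^ 3)⁻¹) := by
  have := three_halves_lt_gold
  have := gold_lt_five_thirds
  have hcube : gold ^ 3 = 2 * gold + 1 := by linear_combination gold * gold_sq + gold_sq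
  rw [hcube, show 1 - (2 * gold + 1)⁻¹ = 2 * gold / (2 * gold + 1) by field_simp; ring]
  field_simp
  nlinarith [gold_sq]

theorem one_lt_gold_pow_three : 1 < gold ^ 3 := one_lt_pow₀ Real.one_lt_goldenRatio three_ne_zero

theorem gold_pow_three_pos : 0 < gold ^ 3 := zero_lt_one.trans one_lt_gold_pow_three

theorem three_mul_inv_gold_pow_three_rpow :
    (3 : ℝ) * (gold ^ 3)⁻¹ ^ ((Real.log 3 / Real.log (gold ^ 3)).toNNReal : ℝ) = 1 := by
  rw [Real.coe_toNNReal _ (div_nonneg (Real.log_nonneg (by norm_num))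
      (Real.log_nonneg one_lt_gold_pow_three.le)), Real.log_div_log,
    Real.inv_rpow gold_pow_three_pos.le, Real.rpow_logb gold_pow_three_pos one_lt_gold_pow_three.ne'
      (by norm_num), mul_inv_cancel₀ three_ne_zero]

theorem dimH_cantorCsharp :
    dimH cantorCsharp = ENNReal.ofReal (Real.log 3 / Real.log (gold ^ 3)) := by
  have := dimH_range_digitSeries_sdiff (inv_pos.2 gold_pow_three_pos)
    (inv_lt_one_of_one_lt₀ one_lt_gold_pow_three) abs_cantorDigit_sub_le
    (fun _ _ => le_abs_cantorDigit_sub) cantor_separation_pos (by norm_num)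
    three_mul_inv_gold_pow_three_rpow
    (countable_inter_setOf_mem_closure_connectedComponentIn_compl cantorC)
  rwa [← cantorC_eq_range, sdiff_self_inter] at this

theorem cantorCsharp_nonempty : cantorCsharp.Nonempty := by
  rw [nonempty_iff_ne_empty]
  intro h
  have := dimH_cantorCsharp
  rw [h, dimH_empty, eq_comm, ENNReal.ofReal_eq_zero] at this
  exact this.not_gt (div_pos (Real.log_pos (by norm_num)) (Real.log_pos one_lt_gold_pow_three))

theorem dense_twoZgold : Dense twoZgold := by
  have : twoZgold = AddSubgroup.closure {2 * gold, 2} := by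
    ext x
    simp only [twoZgold, SetLike.mem_coe, AddSubgroup.mem_closure_pair, zsmul_eq_mul]
    constructor
    · rintro ⟨m, n, rfl⟩
      exact ⟨n, m, by ring⟩
    · rintro ⟨n, m, rfl⟩
      exact ⟨m, n, by ring⟩
  rw [this, dense_addSubgroupClosure_pair_iff, mul_div_cancel_left₀ _ two_ne_zero]
  exact Real.goldenRatio_irrational

def equivalentHeights : Set ℝ :=
  {y | ∃ c ∈ cantorCsharp, ∃ k : ℤ, ∃ ε : ℝ, (ε = 1 ∨ ε = -1) ∧
    y - ε * gold ^ ((3 : ℤ) * k) * c ∈ twoZgold}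

theorem dense_equivalentHeights : Dense equivalentHeights := by
  obtain ⟨c, hc⟩ := cantorCsharp_nonempty
  refine (dense_twoZgold.preimage (isOpenMap_sub_right c)).mono fun y hy => ?_
  exact ⟨c, hc, 0, 1, .inl rfl, by simpa using hy⟩

theorem cantorCsharp_subset_equivalentHeights : cantorCsharp ⊆ equivalentHeights :=
  fun c hc => ⟨c, hc, 0, 1, .inl rfl, 0, 0, by simp⟩

theorem dimH_equivalentHeights : dimH equivalentHeights = dimH cantorCsharp := by
  let f (p : ℤ × ({1, -1} : Set ℝ) × ℤ × ℤ) (c : ℝ) : ℝ :=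
    p.2.1 * gold ^ ((3 : ℤ) * p.1) * c + (2 * p.2.2.1 + 2 * p.2.2.2 * gold)
  have hcover : equivalentHeights ⊆ ⋃ p, f p '' cantorCsharp := by
    rintro y ⟨c, hc, k, ε, hε, m, n, hmn⟩
    exact mem_iUnion.2 ⟨(k, ⟨ε, hε⟩, m, n), c, hc, by simp only [f]; linarith⟩
  refine le_antisymm ((dimH_mono hcover).trans ?_) (dimH_mono cantorCsharp_subset_equivalentHeights)
  rw [dimH_iUnion]
  exact iSup_le fun p =>
    ((lipschitzWith_smul (β := ℝ) (p.2.1 * gold ^ ((3 : ℤ) * p.1))).add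
      (LipschitzWith.const (2 * p.2.2.1 + 2 * p.2.2.2 * gold))).dimH_image_le _

/-- The set of heights equivalent to a point of `C♯` is dense and has Hausdorff
dimension `log 3 / log φ³`. -/
theorem dense_and_dimension_of_equivalent_heights :
    Dense {y : ℝ | ∃ c ∈ cantorCsharp, ∃ k : ℤ, ∃ ε : ℝ, (ε = 1 ∨ ε = -1) ∧
      y - ε * gold ^ ((3 : ℤ) * k) * c ∈ twoZgold} ∧
    dimH {y : ℝ | ∃ c ∈ cantorCsharp, ∃ k : ℤ, ∃ ε : ℝ, (ε = 1 ∨ ε = -1) ∧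
      y - ε * gold ^ ((3 : ℤ) * k) * c ∈ twoZgold} =
      ENNReal.ofReal (Real.log 3 / Real.log (gold ^ 3)) :=
  ⟨dense_equivalentHeights, dimH_equivalentHeights.trans dimH_cantorCsharp⟩
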